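/- arXiv:1605.09570 — 3 statements merged into one kernel-verified Lean document; each statement's English description precedes it below -/
import Mathlib

section
/- Let a ≤ b be real numbers, V, L ≥ 0, and let X : [a,b] → ℝ³ be differentiable. Suppose there are functions w, l, r : [a,b] → ℝ³ with |w(s)| ≤ V and |l(s)| ≤ L for all s ∈ [a,b], such that X'(s) = w(s) − l(s) − r(s) × X(s) for all s ∈ [a,b]. Then for all s, t ∈ [a,b], | |X(s)| − |X(t)| | ≤ (V + L)·|s − t|. -/
/-!
The rotation term is orthogonal to `X`, so the radial velocity `⟪X, X'⟫ / ‖X‖` equals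
`⟪X, w - l⟫ / ‖X‖`, which is bounded by `V + L`. Since `‖X‖` need not be differentiable where `X`
vanishes, the mean value theorem is applied to the smoothing `√(‖X‖² + δ²)`, whose derivative
obeys the same bound and which stays within `δ` of `‖X‖`; then `δ → 0`.
-/

/-- The cross product on `ℝ³`, viewed as Euclidean space. -/
noncomputable def cross3 (a b : EuclideanSpace ℝ (Fin 3)) : EuclideanSpace ℝ (Fin 3) :=
  (WithLp.equiv 2 (Fin 3 → ℝ)).symm
    (crossProduct (WithLp.equiv 2 (Fin 3 → ℝ) a) (WithLp.equiv 2 (Fin 3 → ℝ) b))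

open Real RealInnerProductSpace

lemma inner_cross3_self (v x : EuclideanSpace ℝ (Fin 3)) : ⟪x, cross3 v x⟫ = 0 := by
  simpa [PiLp.inner_apply, cross3, dotProduct, mul_comm] using
    dot_cross_self (WithLp.equiv 2 (Fin 3 → ℝ) v) (WithLp.equiv 2 (Fin 3 → ℝ) x)

lemma sqrt_sq_add_le_add_sqrt {a ε : ℝ} (ha : 0 ≤ a) (hε : 0 ≤ ε) : √(a ^ 2 + ε) ≤ a + √ε := by
  rw [sqrt_le_left (by positivity)]
  nlinarith [sq_sqrt hε, sqrt_nonneg ε]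

lemma le_sqrt_sq_add {a ε : ℝ} (ha : 0 ≤ a) (hε : 0 ≤ ε) : a ≤ √(a ^ 2 + ε) :=
  (le_sqrt ha (by positivity)).2 (by linarith)

section

variable {E : Type*} [NormedAddCommGroup E] [InnerProductSpace ℝ E]

lemma HasDerivWithinAt.sqrt_norm_sq_add {f : ℝ → E} {f' : E} {D : Set ℝ} {x ε : ℝ}
    (hf : HasDerivWithinAt f f' D x) (hε : 0 < ε) :
    HasDerivWithinAt (fun y ↦ √(‖f y‖ ^ 2 + ε)) (⟪f x, f'⟫ / √(‖f x‖ ^ 2 + ε)) D x := by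
  convert (hf.norm_sq.add_const ε).sqrt (by positivity) using 1
  ring

theorem abs_norm_sub_norm_le_of_abs_inner_deriv_le {f f' : ℝ → E} {D : Set ℝ} {C : ℝ}
    (hD : Convex ℝ D) (hC : 0 ≤ C) (hf : ∀ x ∈ D, HasDerivWithinAt f (f' x) D x)
    (hbound : ∀ x ∈ D, |⟪f x, f' x⟫| ≤ C * ‖f x‖) {x y : ℝ} (hx : x ∈ D) (hy : y ∈ D) :
    |‖f x‖ - ‖f y‖| ≤ C * |x - y| := by
  refine le_of_forall_pos_le_add fun δ hδ ↦ ?_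
  set g : ℝ → ℝ := fun z ↦ √(‖f z‖ ^ 2 + δ ^ 2)
  have hg_lip : |g x - g y| ≤ C * |x - y| := by
    refine hD.norm_image_sub_le_of_norm_hasDerivWithin_le
      (fun z hz ↦ (hf z hz).sqrt_norm_sq_add (pow_pos hδ 2)) (fun z hz ↦ ?_) hy hx
    have hpos : 0 < √(‖f z‖ ^ 2 + δ ^ 2) := sqrt_pos.2 (by positivity)
    rw [Real.norm_eq_abs, abs_div, abs_of_pos hpos, div_le_iff₀ hpos]
    exact (hbound z hz).trans <| mul_le_mul_of_nonneg_left
      (le_sqrt_sq_add (norm_nonneg _) (by positivity)) hC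
  have hg_near : ∀ z, ‖f z‖ ≤ g z ∧ g z ≤ ‖f z‖ + δ := fun z ↦
    ⟨le_sqrt_sq_add (norm_nonneg _) (by positivity), by
      simpa [sqrt_sq hδ.le] using sqrt_sq_add_le_add_sqrt (norm_nonneg (f z)) (sq_nonneg δ)⟩
  obtain ⟨hx₁, hx₂⟩ := hg_near x
  obtain ⟨hy₁, hy₂⟩ := hg_near y
  obtain ⟨hg₁, hg₂⟩ := abs_le.1 hg_lip
  rw [abs_le]
  constructor <;> linarith

end

theorem norm_flow_lipschitz_general
    (a b V L : ℝ) (hV : 0 ≤ V) (hL : 0 ≤ L)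
    (X w l r : ℝ → EuclideanSpace ℝ (Fin 3))
    (hw : ∀ s ∈ Set.Icc a b, ‖w s‖ ≤ V)
    (hl : ∀ s ∈ Set.Icc a b, ‖l s‖ ≤ L)
    (hX : ∀ s ∈ Set.Icc a b,
      HasDerivWithinAt X (w s - l s - cross3 (r s) (X s)) (Set.Icc a b) s) :
    ∀ s ∈ Set.Icc a b, ∀ t ∈ Set.Icc a b, |‖X s‖ - ‖X t‖| ≤ (V + L) * |s - t| := by
  refine fun s hs t ht ↦ abs_norm_sub_norm_le_of_abs_inner_deriv_le (convex_Icc a b)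
    (add_nonneg hV hL) hX (fun u hu ↦ ?_) hs ht
  calc |⟪X u, w u - l u - cross3 (r u) (X u)⟫|
      = |⟪X u, w u - l u⟫| := by rw [inner_sub_right _ (w u - l u), inner_cross3_self, sub_zero]
    _ ≤ ‖X u‖ * ‖w u - l u‖ := abs_real_inner_le_norm _ _
    _ ≤ (V + L) * ‖X u‖ := by
      rw [mul_comm]
      gcongr
      exact (norm_sub_le _ _).trans (add_le_add (hw u hu) (hl u hu))

/-- If `X' (s) = w(s) - l(s) - r(s) × X(s)` on `[a,b]` with `‖w‖ ≤ V` and `‖l‖ ≤ L`,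
then `| ‖X(s)‖ - ‖X(t)‖ | ≤ (V + L) |s - t|` for `s, t ∈ [a,b]`. -/
theorem norm_flow_lipschitz
    (a b V L : ℝ) (hab : a ≤ b) (hV : 0 ≤ V) (hL : 0 ≤ L)
    (X w l r : ℝ → EuclideanSpace ℝ (Fin 3))
    (hw : ∀ s ∈ Set.Icc a b, ‖w s‖ ≤ V)
    (hl : ∀ s ∈ Set.Icc a b, ‖l s‖ ≤ L)
    (hX : ∀ s ∈ Set.Icc a b,
      HasDerivWithinAt X (w s - l s - cross3 (r s) (X s)) (Set.Icc a b) s) :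
    ∀ s ∈ Set.Icc a b, ∀ t ∈ Set.Icc a b, |‖X s‖ - ‖X t‖| ≤ (V + L) * |s - t| :=
  norm_flow_lipschitz_general a b V L hV hL X w l r hw hl hX
end

section
/- Let v : ℝ³ → ℝ³ be twice continuously differentiable with div v = 0 on ℝ³, and let l, r ∈ ℝ³ be constant vectors. Set ṽ(y) := v(y) − l − r × y, ω := curl v, and f(y) := ((v(y) − l − r × y)·∇)v(y) + r × v(y). Then curl f = (ṽ·∇)ω − (ω·∇)ṽ at every point of ℝ³. -/
/-!
The curl is a linear function of the Jacobian: `curl3 v y = curlCLM (fderiv ℝ v y)`. With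
`A = Dv(y)`, `R = r ×` and `ṽ = v - l - r × ·`, the product rule gives
`Df(y) = D²v(y)(·)[ṽ y] + A (A - R) + R A`, and by symmetry of `D²v(y)` the first term has curl
`(ṽ·∇)ω`. The rest is linear algebra valid for every `3 × 3` matrix `A`:
`curl (A²) = (tr A) curl A - A curl A` and `curl (R A - A R) = r × curl A`. Since
`tr A = div v = 0`, these add up to `-(A - R) ω = -(ω·∇)ṽ`.
-/

/-- The partial derivative `∂ᵢ v_j` of a vector field on `ℝ³`. -/
noncomputable def pderiv3 (v : (Fin 3 → ℝ) → Fin 3 → ℝ) (i j : Fin 3) (y : Fin 3 → ℝ) : ℝ :=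
  fderiv ℝ v y (Pi.single i 1) j

/-- The curl of a vector field on `ℝ³` (indices `0,1,2` standing for `1,2,3`). -/
noncomputable def curl3 (v : (Fin 3 → ℝ) → Fin 3 → ℝ) (y : Fin 3 → ℝ) : Fin 3 → ℝ :=
  ![pderiv3 v 1 2 y - pderiv3 v 2 1 y,
    pderiv3 v 2 0 y - pderiv3 v 0 2 y,
    pderiv3 v 0 1 y - pderiv3 v 1 0 y]

/-- The divergence of a vector field on `ℝ³`. -/
noncomputable def div3 (v : (Fin 3 → ℝ) → Fin 3 → ℝ) (y : Fin 3 → ℝ) : ℝ :=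
  pderiv3 v 0 0 y + pderiv3 v 1 1 y + pderiv3 v 2 2 y

open scoped Matrix

local notation "ℝ³" => Fin 3 → ℝ

noncomputable section

lemma exists_eq_toLin' {n : Type*} [Fintype n] [DecidableEq n] (A : (n → ℝ) →L[ℝ] n → ℝ) :
    ∃ M : Matrix n n ℝ, A = LinearMap.toContinuousLinearMap (Matrix.toLin' M) :=
  ⟨LinearMap.toMatrix' A, by ext1 u; simp⟩

def curlCLM : (ℝ³ →L[ℝ] ℝ³) →L[ℝ] ℝ³ :=
  LinearMap.toContinuousLinearMap
    { toFun := fun T => ![T (Pi.single 1 1) 2 - T (Pi.single 2 1) 1,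
        T (Pi.single 2 1) 0 - T (Pi.single 0 1) 2,
        T (Pi.single 0 1) 1 - T (Pi.single 1 1) 0]
      map_add' := fun S T => by ext i; fin_cases i <;> simp <;> ring
      map_smul' := fun c T => by ext i; fin_cases i <;> simp <;> ring }

lemma curlCLM_apply (T : ℝ³ →L[ℝ] ℝ³) :
    curlCLM T = ![T (Pi.single 1 1) 2 - T (Pi.single 2 1) 1,
      T (Pi.single 2 1) 0 - T (Pi.single 0 1) 2,
      T (Pi.single 0 1) 1 - T (Pi.single 1 1) 0] :=
  rfl

lemma hasFDerivAt_curl3 {v : ℝ³ → ℝ³} {y : ℝ³} (hv : DifferentiableAt ℝ (fderiv ℝ v) y) :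
    HasFDerivAt (curl3 v) (curlCLM ∘L fderiv ℝ (fderiv ℝ v) y) y :=
  curlCLM.hasFDerivAt.comp y hv.hasFDerivAt

lemma div3_eq_trace_fderiv (v : ℝ³ → ℝ³) (y : ℝ³) :
    div3 v y = LinearMap.trace ℝ ℝ³ (fderiv ℝ v y) := by
  rw [LinearMap.trace_eq_matrix_trace ℝ (Pi.basisFun ℝ (Fin 3)), Matrix.trace_fin_three]
  simp [div3, pderiv3]

def crossCLM (r : ℝ³) : ℝ³ →L[ℝ] ℝ³ := LinearMap.toContinuousLinearMap (crossProduct r)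

@[simp] lemma crossCLM_apply (r u : ℝ³) : crossCLM r u = r ⨯₃ u := rfl

lemma curlCLM_comp_self (A : ℝ³ →L[ℝ] ℝ³) :
    curlCLM (A ∘L A) = LinearMap.trace ℝ ℝ³ A • curlCLM A - A (curlCLM A) := by
  obtain ⟨M, rfl⟩ := exists_eq_toLin' A
  ext j
  fin_cases j <;>
    simp [curlCLM_apply, Matrix.mulVec, dotProduct, Fin.sum_univ_three, Matrix.trace_fin_three] <;>
    ring

lemma curlCLM_crossCLM_comp_sub_comp_crossCLM (r : ℝ³) (A : ℝ³ →L[ℝ] ℝ³) :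
    curlCLM (crossCLM r ∘L A - A ∘L crossCLM r) = r ⨯₃ curlCLM A := by
  obtain ⟨M, rfl⟩ := exists_eq_toLin' A
  ext j
  fin_cases j <;>
    simp [curlCLM_apply, Matrix.mulVec, dotProduct, Fin.sum_univ_three, cross_apply] <;> ring

end

/-- For a divergence-free `C²` vector field `v` on `ℝ³` and constant vectors `l, r`,
with `ṽ(y) := v(y) − l − r × y`, `ω := curl v`, and
`f(y) := ((v(y) − l − r × y)·∇)v(y) + r × v(y)`, one has
`curl f = (ṽ·∇)ω − (ω·∇)ṽ`. -/
theorem curl_convective_term_rigid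
    (v : (Fin 3 → ℝ) → Fin 3 → ℝ) (hv : ContDiff ℝ 2 v)
    (hdiv : ∀ y : Fin 3 → ℝ, div3 v y = 0) (l r : Fin 3 → ℝ) :
    ∀ y : Fin 3 → ℝ,
      curl3 (fun z => fderiv ℝ v z (v z - l - crossProduct r z) + crossProduct r (v z)) y
        = fderiv ℝ (curl3 v) y (v y - l - crossProduct r y)
            - fderiv ℝ (fun z => v z - l - crossProduct r z) y (curl3 v y) := by
  intro y
  have hv₁ : Differentiable ℝ v := hv.differentiable (by norm_num)
  have hv₂ : Differentiable ℝ (fderiv ℝ v) :=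
    (hv.fderiv_right (m := 1) (by norm_num)).differentiable one_ne_zero
  set A := fderiv ℝ v y
  set B := fderiv ℝ (fderiv ℝ v) y
  set R := crossCLM r
  set w := fun z => v z - l - r ⨯₃ z
  have hw : HasFDerivAt w (A - R) y := ((hv₁ y).hasFDerivAt.sub_const l).sub R.hasFDerivAt
  have hf : HasFDerivAt (fun z => fderiv ℝ v z (w z) + r ⨯₃ v z)
      (A ∘L (A - R) + B.flip (w y) + R ∘L A) y :=
    ((hv₂ y).hasFDerivAt.clm_apply hw).add (R.hasFDerivAt.comp y (hv₁ y).hasFDerivAt)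
  have hsymm : B.flip (w y) = B (w y) := ContinuousLinearMap.ext fun u =>
    (hv.contDiffAt.isSymmSndFDerivAt (by simp [minSmoothness_of_isRCLikeNormedField]) (w y) u).symm
  have htr : LinearMap.trace ℝ ℝ³ A = 0 := div3_eq_trace_fderiv v y ▸ hdiv y
  show curlCLM (fderiv ℝ (fun z => fderiv ℝ v z (w z) + r ⨯₃ v z) y)
    = fderiv ℝ (curl3 v) y (w y) - fderiv ℝ w y (curlCLM A)
  rw [hf.fderiv, hw.fderiv, (hasFDerivAt_curl3 (hv₂ y)).fderiv]
  calc curlCLM (A ∘L (A - R) + B.flip (w y) + R ∘L A)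
      = curlCLM (B (w y)) + curlCLM (A ∘L A) + curlCLM (R ∘L A - A ∘L R) := by
        rw [hsymm, ContinuousLinearMap.comp_sub]
        simp only [map_add, map_sub]
        abel
    _ = curlCLM (B (w y)) - (A - R) (curlCLM A) := by
        rw [curlCLM_comp_self, curlCLM_crossCLM_comp_sub_comp_crossCLM, htr, zero_smul,
          sub_apply, crossCLM_apply]
        abel
end

section
/- Let ṽ : ℝ × ℝ³ → ℝ³ be continuously differentiable. Let X : ℝ × ℝ × ℝ³ → ℝ³, written X(s; t, y), be continuously differentiable and satisfy: (i) ∂X/∂s(s; t, y) = ṽ(s, X(s; t, y)) and X(t; t, y) = y for all s, t, y; (ii) the flow property X(s; τ, X(τ; t, y)) = X(s; t, y) for all s, τ, t, y. Let G(s; t, y) := ∂X/∂y(s; t, y) be the Jacobian of X with respect to y, assume G(s; t, y) is invertible for all (s, t, y), that (t, y) ↦ G(0; t, y) is continuously differentiable, and that the variational equation ∂G/∂s(s; t, y) = D_xṽ(s, X(s; t, y))·G(s; t, y) holds. Let ω₀ : ℝ³ → ℝ³ be continuously differentiable and define ω(t, y) := G(0; t, y)⁻¹ · ω₀(X(0;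 t, y)). Then ω is differentiable and satisfies the transport equation ∂ω/∂t(t, y) + D_yω(t, y)[ṽ(t, y)] − D_xṽ(t, y)[ω(t, y)] = 0 for all (t, y). -/
/-!
Along a trajectory `s ↦ X(s; t, y)` the field `ω` is pushed forward by the Jacobian of the flow:
the chain rule for `X(0; t, ·) = X(0; s, ·) ∘ X(s; t, ·)` gives the Cauchy formula
`ω(s, X(s; t, y)) = G(s; t, y) ω(t, y)`. Differentiating it in `s` at `s = t`, the left side
yields the material derivative `∂ₜω + D_yω[ṽ]` (since `∂ₛX = ṽ` and `X(t; t, y) = y`), while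
the variational equation and `G(t; t, y) = 1` turn the right side into `D_xṽ[ω]`.
-/

/-- The Jacobian matrix of a map `ℝ³ → ℝ³` at a point. -/
noncomputable def jac3 (f : (Fin 3 → ℝ) → Fin 3 → ℝ) (x : Fin 3 → ℝ) :
    Matrix (Fin 3) (Fin 3) ℝ :=
  Matrix.of fun i j => fderiv ℝ f x (Pi.single j 1) i

open Matrix

section MatrixCalculus

variable {E : Type*} [NormedAddCommGroup E] [NormedSpace ℝ E] {m n : Type*} [Fintype n]

theorem differentiable_matrix_det [DecidableEq n] {M : E → Matrix n n ℝ}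
    (hM : ∀ i j, Differentiable ℝ fun p => M p i j) : Differentiable ℝ fun p => (M p).det := by
  simp only [Matrix.det_apply]
  fun_prop

theorem differentiable_matrix_adjugate_apply [DecidableEq n] {M : E → Matrix n n ℝ}
    (hM : ∀ i j, Differentiable ℝ fun p => M p i j) (i j : n) :
    Differentiable ℝ fun p => (M p).adjugate i j := by
  simp only [Matrix.adjugate_apply]
  refine differentiable_matrix_det fun k l => ?_
  simp only [Matrix.updateRow_apply]
  split_ifs
  · exact differentiable_const _
  · exact hM k l

theorem differentiable_matrix_inv_apply [DecidableEq n] {M : E → Matrix n n ℝ}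
    (hM : ∀ i j, Differentiable ℝ fun p => M p i j) (hU : ∀ p, IsUnit (M p)) (i j : n) :
    Differentiable ℝ fun p => (M p)⁻¹ i j := by
  have hdet : ∀ p, (M p).det ≠ 0 := fun p => ((M p).isUnit_iff_isUnit_det.1 (hU p)).ne_zero
  simp only [Matrix.inv_def, Ring.inverse_eq_inv, Matrix.smul_apply, smul_eq_mul]
  exact ((differentiable_matrix_det hM).inv hdet).mul (differentiable_matrix_adjugate_apply hM i j)

theorem Differentiable.matrix_mulVec {M : E → Matrix m n ℝ} {w : E → n → ℝ}
    (hM : ∀ i j, Differentiable ℝ fun p => M p i j) (hw : Differentiable ℝ w) :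
    Differentiable ℝ fun p => M p *ᵥ w p := by
  have hw' := differentiable_pi.1 hw
  refine differentiable_pi.2 fun i => ?_
  simp only [Matrix.mulVec, dotProduct]
  fun_prop

theorem hasDerivAt_matrix_mulVec_const {M : ℝ → Matrix m n ℝ} {M' : Matrix m n ℝ} {t : ℝ}
    (hM : ∀ i j, HasDerivAt (fun s => M s i j) (M' i j) t) (w : n → ℝ) :
    HasDerivAt (fun s => M s *ᵥ w) (M' *ᵥ w) t := by
  refine hasDerivAt_pi.2 fun i => ?_
  simp only [Matrix.mulVec, dotProduct]
  exact HasDerivAt.fun_sum fun j _ => (hM i j).mul_const (w j)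

end MatrixCalculus

theorem jac3_eq_toMatrix' (f : (Fin 3 → ℝ) → Fin 3 → ℝ) (x : Fin 3 → ℝ) :
    jac3 f x = LinearMap.toMatrix' (fderiv ℝ f x : (Fin 3 → ℝ) →ₗ[ℝ] Fin 3 → ℝ) :=
  rfl

theorem jac3_mulVec (f : (Fin 3 → ℝ) → Fin 3 → ℝ) (x v : Fin 3 → ℝ) :
    jac3 f x *ᵥ v = fderiv ℝ f x v := by
  rw [jac3_eq_toMatrix', LinearMap.toMatrix'_mulVec, ContinuousLinearMap.coe_coe]

theorem jac3_comp {f g : (Fin 3 → ℝ) → Fin 3 → ℝ} {x : Fin 3 → ℝ}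
    (hf : DifferentiableAt ℝ f x) (hg : DifferentiableAt ℝ g (f x)) :
    jac3 (fun y => g (f y)) x = jac3 g (f x) * jac3 f x := by
  rw [jac3_eq_toMatrix', fderiv_fun_comp x hg hf, ContinuousLinearMap.toLinearMap_comp,
    LinearMap.toMatrix'_comp, ← jac3_eq_toMatrix', ← jac3_eq_toMatrix']

theorem jac3_id (x : Fin 3 → ℝ) : jac3 (fun y => y) x = 1 := by
  rw [jac3_eq_toMatrix', fderiv_fun_id, ContinuousLinearMap.coe_id, LinearMap.toMatrix'_id]

section PartialDerivatives

variable {E F : Type*} [NormedAddCommGroup E] [NormedSpace ℝ E]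
  [NormedAddCommGroup F] [NormedSpace ℝ F]

theorem DifferentiableAt.fderiv_uncurry_apply {f : ℝ → E → F} {t : ℝ} {y : E}
    (hf : DifferentiableAt ℝ (fun p : ℝ × E => f p.1 p.2) (t, y)) (v : E) :
    fderiv ℝ (fun p : ℝ × E => f p.1 p.2) (t, y) (1, v) =
      deriv (fun u => f u y) t + fderiv ℝ (f t) y v := by
  have htime :
      HasDerivAt (fun u => f u y) (fderiv ℝ (fun p : ℝ × E => f p.1 p.2) (t, y) (1, 0)) t :=
    hf.hasFDerivAt.comp_hasDerivAt (x := t) (f := fun u => (u, y))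
      ((hasDerivAt_id t).prodMk (hasDerivAt_const t y))
  have hspace : HasFDerivAt (f t) ((fderiv ℝ (fun p : ℝ × E => f p.1 p.2) (t, y)).comp
      ((0 : E →L[ℝ] ℝ).prod (ContinuousLinearMap.id ℝ E))) y :=
    hf.hasFDerivAt.comp (f := fun x => (t, x)) y
      ((hasFDerivAt_const t y).prodMk (hasFDerivAt_id y))
  rw [htime.deriv, hspace.fderiv, ContinuousLinearMap.comp_apply, ← map_add]
  simp

theorem DifferentiableAt.hasDerivAt_comp_curve {f : ℝ → E → F} {c : ℝ → E} {c' : E} {t : ℝ}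
    (hf : DifferentiableAt ℝ (fun p : ℝ × E => f p.1 p.2) (t, c t)) (hc : HasDerivAt c c' t) :
    HasDerivAt (fun s => f s (c s))
      (deriv (fun u => f u (c t)) t + fderiv ℝ (f t) (c t) c') t := by
  rw [← hf.fderiv_uncurry_apply]
  exact hf.hasFDerivAt.comp_hasDerivAt (f := fun s => (s, c s)) t ((hasDerivAt_id t).prodMk hc)

end PartialDerivatives

section Flow

variable {vt : ℝ → (Fin 3 → ℝ) → Fin 3 → ℝ} {X : ℝ → ℝ → (Fin 3 → ℝ) → Fin 3 → ℝ}
  {G : ℝ → ℝ → (Fin 3 → ℝ) → Matrix (Fin 3) (Fin 3) ℝ}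
  {ω₀ : (Fin 3 → ℝ) → Fin 3 → ℝ} {ω : ℝ → (Fin 3 → ℝ) → Fin 3 → ℝ}

theorem vorticity_flow_eq_mulVec (hXd : ∀ s t, Differentiable ℝ (X s t))
    (hXflow : ∀ s τ t y, X s τ (X τ t y) = X s t y) (hGdef : ∀ s t y, G s t y = jac3 (X s t) y)
    (hGinv : ∀ s t y, IsUnit (G s t y))
    (hωdef : ∀ t y, ω t y = (G 0 t y)⁻¹ *ᵥ ω₀ (X 0 t y)) (s t : ℝ) (y : Fin 3 → ℝ) :
    ω s (X s t y) = G s t y *ᵥ ω t y := by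
  have hcocycle : G 0 t y = G 0 s (X s t y) * G s t y := by
    have hcomp : X 0 t = fun w => X 0 s (X s t w) := funext fun w => (hXflow 0 s t w).symm
    rw [hGdef, hGdef, hGdef, hcomp]
    exact jac3_comp (hXd s t y) (hXd 0 s (X s t y))
  have hdet : IsUnit (G s t y).det := (G s t y).isUnit_iff_isUnit_det.1 (hGinv s t y)
  have hinv : (G 0 s (X s t y))⁻¹ = G s t y * (G 0 t y)⁻¹ := by
    rw [hcocycle, Matrix.mul_inv_rev, ← Matrix.mul_assoc, Matrix.mul_nonsing_inv _ hdet,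
      Matrix.one_mul]
  rw [hωdef, hωdef t, hXflow, hinv, ← Matrix.mulVec_mulVec]

theorem hasDerivAt_vorticity_along_flow (hXinit : ∀ t y, X t t y = y)
    (hGdef : ∀ s t y, G s t y = jac3 (X s t) y)
    (hGvar : ∀ s t y i j,
      HasDerivAt (fun u => G u t y i j) ((jac3 (vt s) (X s t y) * G s t y) i j) s)
    {t : ℝ} {y : Fin 3 → ℝ} (hcauchy : ∀ s, ω s (X s t y) = G s t y *ᵥ ω t y) :
    HasDerivAt (fun s => ω s (X s t y)) (fderiv ℝ (vt t) y (ω t y)) t := by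
  have hG : G t t y = 1 := by
    rw [hGdef, funext (hXinit t), jac3_id]
  have hvar := hasDerivAt_matrix_mulVec_const (hGvar t t y) (ω t y)
  rw [hG, hXinit, Matrix.mul_one, jac3_mulVec] at hvar
  simpa only [hcauchy] using hvar

end Flow

theorem vorticity_transport_general
    (vt : ℝ → (Fin 3 → ℝ) → Fin 3 → ℝ)
    (X : ℝ → ℝ → (Fin 3 → ℝ) → Fin 3 → ℝ)
    (hX : ContDiff ℝ 1 fun p : ℝ × ℝ × (Fin 3 → ℝ) => X p.1 p.2.1 p.2.2)
    (hXode : ∀ s t y, HasDerivAt (fun u => X u t y) (vt s (X s t y)) s)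
    (hXinit : ∀ t y, X t t y = y)
    (hXflow : ∀ s τ t y, X s τ (X τ t y) = X s t y)
    (G : ℝ → ℝ → (Fin 3 → ℝ) → Matrix (Fin 3) (Fin 3) ℝ)
    (hGdef : ∀ s t y, G s t y = jac3 (X s t) y)
    (hGinv : ∀ s t y, IsUnit (G s t y))
    (hGC1 : ∀ i j, ContDiff ℝ 1 fun p : ℝ × (Fin 3 → ℝ) => G 0 p.1 p.2 i j)
    (hGvar : ∀ s t y i j,
      HasDerivAt (fun u => G u t y i j) ((jac3 (vt s) (X s t y) * G s t y) i j) s)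
    (ω₀ : (Fin 3 → ℝ) → Fin 3 → ℝ) (hω₀ : ContDiff ℝ 1 ω₀)
    (ω : ℝ → (Fin 3 → ℝ) → Fin 3 → ℝ)
    (hωdef : ∀ t y, ω t y = (G 0 t y)⁻¹.mulVec (ω₀ (X 0 t y))) :
    Differentiable ℝ (fun p : ℝ × (Fin 3 → ℝ) => ω p.1 p.2) ∧
    ∀ t y, deriv (fun u => ω u y) t + fderiv ℝ (ω t) y (vt t y)
        - fderiv ℝ (vt t) y (ω t y) = 0 := by
  have hXd := hX.differentiable one_ne_zero
  have hXst : ∀ s t, Differentiable ℝ (X s t) := fun s t =>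
    hXd.comp (by fun_prop : Differentiable ℝ fun y : Fin 3 → ℝ => (s, t, y))
  have hω : Differentiable ℝ (fun p : ℝ × (Fin 3 → ℝ) => ω p.1 p.2) := by
    simp only [hωdef]
    refine Differentiable.matrix_mulVec (differentiable_matrix_inv_apply
      (fun i j => (hGC1 i j).differentiable one_ne_zero) fun p => hGinv 0 p.1 p.2) ?_
    exact (hω₀.differentiable one_ne_zero).comp
      (hXd.comp (by fun_prop : Differentiable ℝ fun p : ℝ × (Fin 3 → ℝ) => ((0 : ℝ), p.1, p.2)))
  refine ⟨hω, fun t y => ?_⟩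
  have hmaterial := (hω (t, X t t y)).hasDerivAt_comp_curve (hXode t t y)
  rw [hXinit] at hmaterial
  have hstretch := hasDerivAt_vorticity_along_flow hXinit hGdef hGvar
    (vorticity_flow_eq_mulVec hXst hXflow hGdef hGinv hωdef · t y)
  rw [hmaterial.unique hstretch, sub_self]

/-- **Transport of the vorticity along the flow.**
If `X` is the flow of `vt`, `G` its Jacobian with respect to the initial condition,
and `ω(t,y) := G(0;t,y)⁻¹ ω₀(X(0;t,y))`, then `ω` satisfies the transport equation
`∂ω/∂t + (vt·∇)ω − (ω·∇)vt = 0`. -/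
theorem vorticity_transport
    (vt : ℝ → (Fin 3 → ℝ) → Fin 3 → ℝ)
    (hvt : ContDiff ℝ 1 fun p : ℝ × (Fin 3 → ℝ) => vt p.1 p.2)
    (X : ℝ → ℝ → (Fin 3 → ℝ) → Fin 3 → ℝ)
    (hX : ContDiff ℝ 1 fun p : ℝ × ℝ × (Fin 3 → ℝ) => X p.1 p.2.1 p.2.2)
    (hXode : ∀ s t y, HasDerivAt (fun u => X u t y) (vt s (X s t y)) s)
    (hXinit : ∀ t y, X t t y = y)
    (hXflow : ∀ s τ t y, X s τ (X τ t y) = X s t y)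
    (G : ℝ → ℝ → (Fin 3 → ℝ) → Matrix (Fin 3) (Fin 3) ℝ)
    (hGdef : ∀ s t y, G s t y = jac3 (X s t) y)
    (hGinv : ∀ s t y, IsUnit (G s t y))
    (hGC1 : ∀ i j, ContDiff ℝ 1 fun p : ℝ × (Fin 3 → ℝ) => G 0 p.1 p.2 i j)
    (hGvar : ∀ s t y i j,
      HasDerivAt (fun u => G u t y i j) ((jac3 (vt s) (X s t y) * G s t y) i j) s)
    (ω₀ : (Fin 3 → ℝ) → Fin 3 → ℝ) (hω₀ : ContDiff ℝ 1 ω₀)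
    (ω : ℝ → (Fin 3 → ℝ) → Fin 3 → ℝ)
    (hωdef : ∀ t y, ω t y = (G 0 t y)⁻¹.mulVec (ω₀ (X 0 t y))) :
    Differentiable ℝ (fun p : ℝ × (Fin 3 → ℝ) => ω p.1 p.2) ∧
    ∀ t y, deriv (fun u => ω u y) t + fderiv ℝ (ω t) y (vt t y)
        - fderiv ℝ (vt t) y (ω t y) = 0 :=
  vorticity_transport_general vt X hX hXode hXinit hXflow G hGdef hGinv hGC1 hGvar ω₀ hω₀ ω hωdef
end
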